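/- Let k be a nonnegative integer and let z be a real number with 0 < z < 4. Then S_k(z) = \int_0^1 \frac{1}{t} \Big( \sum_{m=1}^{\infty} m^{k+1} (z t (1-t))^m \Big) \, dt, where the series under the integral converges for every t \in (0,1) since 0 \le z t(1-t) \le z/4 < 1. -/

import Mathlib

open scoped BigOperators

/-- `S k z = ∑_{n=1}^∞ n^k z^n / C(2n,n)`. -/
noncomputable def aperySeries (k : ℕ) (z : ℝ) : ℝ :=
  ∑' n : ℕ, ((n : ℝ) + 1) ^ k * z ^ (n + 1) / (Nat.choose (2 * (n + 1)) (n + 1))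

/-- Stirling numbers of the second kind:
`S(k,j) = (-1)^j / j! * ∑_{m=0}^j (-1)^m m^k C(j,m)`. -/
noncomputable def stirling2 (k j : ℕ) : ℝ :=
  (-1 : ℝ) ^ j / (Nat.factorial j) *
    ∑ m ∈ Finset.range (j + 1), (-1 : ℝ) ^ m * (m : ℝ) ^ k * (Nat.choose j m)

/-- Pochhammer (ascending factorial): `(a)_n = a (a+1) ⋯ (a+n-1)`. -/
noncomputable def poch (a : ℝ) (n : ℕ) : ℝ :=
  ∏ i ∈ Finset.range n, (a + i)

/-!
The `m`-th term of the integrand's expansion in powers of `z` is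
`(m+1)^(k+1) z^(m+1) t^m (1-t)^(m+1)`, and the Beta integral
`∫₀¹ t^m (1-t)^(m+1) dt = m! (m+1)! / (2m+2)! = 1 / ((m+1) C(2m+2, m+1))` turns it into
the `m`-th term of `S_k(z)`. Since `t (1-t) ≤ 1/4`, the terms are dominated by
`4 (m+1)^(k+1) (|z|/4)^(m+1)`, which is summable for `|z| < 4`, so summation and integration
commute.
-/

open Nat

theorem integral_pow_mul_one_sub_pow (a b : ℕ) :
    ∫ t in (0 : ℝ)..1, t ^ a * (1 - t) ^ b = (a ! * b ! : ℝ) / (a + b + 1)! := by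
  induction b generalizing a with
  | zero =>
    simp only [pow_zero, mul_one, integral_pow, factorial_zero, cast_one, add_zero,
      factorial_succ, cast_mul]
    field_simp
    simp
  | succ b ih =>
    have hsplit : ∀ t : ℝ,
        t ^ a * (1 - t) ^ (b + 1) = t ^ a * (1 - t) ^ b - t ^ (a + 1) * (1 - t) ^ b :=
      fun t => by ring
    simp_rw [hsplit]
    rw [intervalIntegral.integral_sub
      ((by fun_prop : Continuous _).intervalIntegrable _ _)
      ((by fun_prop : Continuous _).intervalIntegrable _ _), ih, ih,
      show a + 1 + b + 1 = a + (b + 1) + 1 by ring, show a + b + 1 = a + (b + 1) by ring]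
    rw [factorial_succ (a + (b + 1)), factorial_succ a, factorial_succ b]
    push_cast
    field_simp
    ring

theorem integral_pow_mul_one_sub_pow_succ (m : ℕ) :
    ∫ t in (0 : ℝ)..1, t ^ m * (1 - t) ^ (m + 1) =
      1 / ((m + 1) * (2 * (m + 1)).choose (m + 1)) := by
  have hchoose := add_choose_mul_factorial_mul_factorial (m + 1) (m + 1)
  rw [integral_pow_mul_one_sub_pow, show m + (m + 1) + 1 = m + 1 + (m + 1) by ring,
    ← hchoose, two_mul, factorial_succ m]
  have : ((m + 1 + (m + 1)).choose (m + 1) : ℝ) ≠ 0 := by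
    exact_mod_cast (choose_pos (le_add_self)).ne'
  push_cast
  field_simp

theorem mul_one_sub_le_quarter (t : ℝ) : t * (1 - t) ≤ 1 / 4 := by
  nlinarith [sq_nonneg (t - 1 / 2)]

theorem pow_mul_one_sub_pow_succ_le {t : ℝ} (ht0 : 0 ≤ t) (ht1 : t ≤ 1) (m : ℕ) :
    t ^ m * (1 - t) ^ (m + 1) ≤ (1 / 4) ^ m :=
  calc t ^ m * (1 - t) ^ (m + 1) = (t * (1 - t)) ^ m * (1 - t) := by rw [mul_pow, pow_succ]; ring
    _ ≤ (1 / 4) ^ m * 1 := by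
      have h1t : 0 ≤ 1 - t := by linarith
      exact mul_le_mul (pow_le_pow_left₀ (by positivity) (mul_one_sub_le_quarter t) m)
        (by linarith) h1t (by positivity)
    _ = (1 / 4) ^ m := mul_one _

theorem summable_succ_pow_mul_pow_succ (k : ℕ) {r : ℝ} (hr : |r| < 1) :
    Summable fun m : ℕ => ((m : ℝ) + 1) ^ k * r ^ (m + 1) := by
  have := (summable_nat_add_iff (f := fun n : ℕ => (n : ℝ) ^ k * r ^ n) 1).2
    (summable_pow_mul_geometric_of_norm_lt_one k hr)
  simpa only [cast_add, cast_one] using this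

theorem hasSum_succ_pow_mul_pow_mul_one_sub_pow (k : ℕ) {z t : ℝ} (hz : |z| < 4)
    (ht0 : 0 < t) (ht1 : t ≤ 1) :
    HasSum (fun m : ℕ => ((m : ℝ) + 1) ^ (k + 1) * z ^ (m + 1) * (t ^ m * (1 - t) ^ (m + 1)))
      ((1 / t) * ∑' m : ℕ, ((m : ℝ) + 1) ^ (k + 1) * (z * t * (1 - t)) ^ (m + 1)) := by
  have hr : |z * t * (1 - t)| < 1 := by
    have ht : 0 ≤ t * (1 - t) := mul_nonneg ht0.le (by linarith)
    rw [mul_assoc, abs_mul, abs_of_nonneg ht]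
    nlinarith [mul_one_sub_le_quarter t, abs_nonneg z]
  refine ((summable_succ_pow_mul_pow_succ (k + 1) hr).hasSum.mul_left (1 / t)).congr_fun
    fun m => ?_
  rw [mul_pow, mul_pow, pow_succ t]
  field_simp

theorem norm_succ_pow_mul_pow_mul_one_sub_pow_le (k m : ℕ) (z : ℝ) {t : ℝ} (ht0 : 0 ≤ t)
    (ht1 : t ≤ 1) :
    ‖((m : ℝ) + 1) ^ (k + 1) * z ^ (m + 1) * (t ^ m * (1 - t) ^ (m + 1))‖ ≤
      4 * (((m : ℝ) + 1) ^ (k + 1) * (|z| / 4) ^ (m + 1)) := by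
  have h1t : 0 ≤ 1 - t := by linarith
  rw [Real.norm_eq_abs, abs_mul, abs_mul, abs_of_nonneg (by positivity : (0 : ℝ) ≤ _),
    abs_of_nonneg (by positivity : 0 ≤ t ^ m * (1 - t) ^ (m + 1)), abs_pow]
  calc ((m : ℝ) + 1) ^ (k + 1) * |z| ^ (m + 1) * (t ^ m * (1 - t) ^ (m + 1))
      ≤ ((m : ℝ) + 1) ^ (k + 1) * |z| ^ (m + 1) * (1 / 4) ^ m := by
        gcongr
        exact pow_mul_one_sub_pow_succ_le ht0 ht1 m
    _ = 4 * (((m : ℝ) + 1) ^ (k + 1) * (|z| / 4) ^ (m + 1)) := by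
        rw [div_pow, div_pow, one_pow, pow_succ (4 : ℝ)]
        field_simp

theorem apery_series_eq_integral (k : ℕ) (z : ℝ) (hz0 : 0 < z) (hz4 : z < 4) :
    aperySeries k z =
      ∫ t in (0:ℝ)..1,
        (1 / t) * ∑' m : ℕ, ((m : ℝ) + 1) ^ (k + 1) * (z * t * (1 - t)) ^ (m + 1) := by
  have hz : |z| < 4 := by rwa [abs_of_pos hz0]
  have hr : |(|z| / 4)| < 1 := by rw [abs_div, abs_abs]; norm_num; linarith
  have hIoc : Set.uIoc (0 : ℝ) 1 = Set.Ioc 0 1 := Set.uIoc_of_le zero_le_one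
  have hsum := intervalIntegral.hasSum_integral_of_dominated_convergence
    (μ := MeasureTheory.volume)
    (F := fun (m : ℕ) t => ((m : ℝ) + 1) ^ (k + 1) * z ^ (m + 1) * (t ^ m * (1 - t) ^ (m + 1)))
    (fun (m : ℕ) _ => 4 * (((m : ℝ) + 1) ^ (k + 1) * (|z| / 4) ^ (m + 1)))
    (fun m => (by fun_prop : Continuous _).aestronglyMeasurable)
    (fun m => .of_forall fun t ht => by
      rw [hIoc] at ht
      exact norm_succ_pow_mul_pow_mul_one_sub_pow_le k m z ht.1.le ht.2)
    (.of_forall fun _ _ => (summable_succ_pow_mul_pow_succ (k + 1) hr).mul_left 4)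
    intervalIntegrable_const
    (.of_forall fun t ht => by
      rw [hIoc] at ht
      exact hasSum_succ_pow_mul_pow_mul_one_sub_pow k hz ht.1 ht.2)
  rw [← hsum.tsum_eq, aperySeries]
  refine tsum_congr fun m => ?_
  rw [intervalIntegral.integral_const_mul, integral_pow_mul_one_sub_pow_succ]
  field_simp
  ring
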